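/- arXiv:1412.3884 — 4 statements merged into one kernel-verified Lean document; each statement's English description precedes it below -/
import Mathlib

section
/- A product of right-negative monomials (in the Laurent monomials on variables Y_{i, a qˢ}, i ∈ I, s ∈ ℤ) is right-negative. -/
/-!
Call `m` vanishing above level `s` if no variable `Y_{j, aqᵗ}` with `t > s` occurs in it. Right
negativity says exactly that all exponents at level `s` are `≤ 0` whenever `m` vanishes above `s`.
If `m + m'` vanishes above `s` but `m` or `m'` does not, look at the highest level `t > s` where
one of them has a nonzero exponent: both vanish above `t`, so their exponents at level `t` are
`≤ 0` and sum to `0`, hence are all `0`, a contradiction. So `m` and `m'` vanish above `s` too, and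
the exponents of `m + m'` at level `s` are sums of nonpositive ones.
-/

/-- A Laurent monomial in the variables `Y_{i, a qˢ}` (encoded additively by its
finitely supported exponent function) is right-negative if for every `i, s` such that
the exponent of `Y_{i,aqˢ}` is nonzero while no variable `Y_{j, aq^{s+k}}`, `k > 0`,
occurs, the exponent of `Y_{i,aqˢ}` is negative. -/
def RightNegative {I : Type*} (m : (I × ℤ) →₀ ℤ) : Prop :=
  ∀ (i : I) (s : ℤ), m (i, s) ≠ 0 → (∀ (j : I) (k : ℤ), 0 < k → m (j, s + k) = 0) →
    m (i, s) < 0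

def VanishesAbove {I : Type*} (m : (I × ℤ) →₀ ℤ) (s : ℤ) : Prop :=
  ∀ (j : I) (t : ℤ), s < t → m (j, t) = 0

namespace RightNegative

variable {I : Type*} {m m' : (I × ℤ) →₀ ℤ} {s : ℤ}

theorem nonpos_of_vanishesAbove (hm : RightNegative m) (h : VanishesAbove m s) (i : I) :
    m (i, s) ≤ 0 := by
  by_cases hi : m (i, s) = 0
  · exact hi.le
  · exact (hm i s hi fun j k hk => h j (s + k) (by omega)).le

theorem of_nonpos_of_vanishesAbove
    (hm : ∀ (i : I) (s : ℤ), VanishesAbove m s → m (i, s) ≤ 0) : RightNegative m := by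
  intro i s hi hzero
  refine lt_of_le_of_ne (hm i s fun j t hst => ?_) hi
  simpa using hzero j (t - s) (by omega)

theorem vanishesAbove_of_add (hm : RightNegative m) (hm' : RightNegative m')
    (h : VanishesAbove (m + m') s) : VanishesAbove m s ∧ VanishesAbove m' s := by
  classical
  set T := ((m.support ∪ m'.support).image Prod.snd).filter (s < ·)
  have mem_T : ∀ j t, s < t → (m (j, t) ≠ 0 ∨ m' (j, t) ≠ 0) → t ∈ T := fun j t hst hne =>
    Finset.mem_filter.2 ⟨Finset.mem_image.2 ⟨(j, t), by simpa using hne, rfl⟩, hst⟩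
  by_contra hne
  have hT : T.Nonempty := by
    simp only [VanishesAbove, not_and_or, not_forall] at hne
    obtain ⟨j, t, hst, hj⟩ | ⟨j, t, hst, hj⟩ := hne
    exacts [⟨t, mem_T j t hst (.inl hj)⟩, ⟨t, mem_T j t hst (.inr hj)⟩]
  set t := T.max' hT
  have hst : s < t := (Finset.mem_filter.1 (T.max'_mem hT)).2
  have vanishes_of_top : ∀ j u, t < u → m (j, u) = 0 ∧ m' (j, u) = 0 := fun j u htu => by
    by_contra hu
    exact (T.le_max' u (mem_T j u (hst.trans htu) (by tauto))).not_gt htu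
  have level_zero : ∀ j, m (j, t) = 0 ∧ m' (j, t) = 0 := fun j => by
    have hle := hm.nonpos_of_vanishesAbove (fun j u hu => (vanishes_of_top j u hu).1) j
    have hle' := hm'.nonpos_of_vanishesAbove (fun j u hu => (vanishes_of_top j u hu).2) j
    have hsum : m (j, t) + m' (j, t) = 0 := h j t hst
    omega
  obtain ⟨⟨j, _⟩, hjt, rfl⟩ := Finset.mem_image.1 (Finset.mem_filter.1 (T.max'_mem hT)).1
  rcases Finset.mem_union.1 hjt with hj | hj
  · exact Finsupp.mem_support_iff.1 hj (level_zero j).1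
  · exact Finsupp.mem_support_iff.1 hj (level_zero j).2

end RightNegative

theorem rightNegative_mul_general {I : Type*} (m m' : (I × ℤ) →₀ ℤ)
    (hm : RightNegative m) (hm' : RightNegative m') :
    RightNegative (m + m') := by
  refine RightNegative.of_nonpos_of_vanishesAbove fun i s h => ?_
  obtain ⟨hvan, hvan'⟩ := RightNegative.vanishesAbove_of_add hm hm' h
  exact add_nonpos (hm.nonpos_of_vanishesAbove hvan i) (hm'.nonpos_of_vanishesAbove hvan' i)

/-- A product of right-negative monomials is right-negative. -/
theorem rightNegative_mul {I : Type*} [Fintype I] (m m' : (I × ℤ) →₀ ℤ)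
    (hm : RightNegative m) (hm' : RightNegative m') :
    RightNegative (m + m') :=
  rightNegative_mul_general m m' hm hm'
end

section
/- In the Laurent polynomial ring ℤ[Y_a^{±1} : a ∈ ℂ×], the q-character of the sl₂ Kirillov–Reshetikhin module, χ_q(W_k^{(a)}) = X_k^{(a)} · Σ_{i=0}^{k} ∏_{j=0}^{i-1} A_{aq^{k-2j}}⁻¹ with X_k^{(a)} = ∏_{i=0}^{k-1} Y_{aq^{k-2i-1}} and A_a = Y_{aq⁻¹}Y_{aq}, contains exactly one dominant monomial (a monomial with all exponents ≥ 0), namely X_k^{(a)}. -/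
/-! The variable `Y_{aq^{k+1}}` does not occur in `X_k^{(a)}`, while among the factors
`A_{aq^{k-2j}} = Y_{aq^{k-2j-1}} Y_{aq^{k-2j+1}}` it occurs only in `A_{aq^k}`. Hence for
`i ≥ 1` the monomial `X_k^{(a)} ∏_{j<i} A_{aq^{k-2j}}⁻¹` has exponent `-1` at `Y_{aq^{k+1}}`. -/

noncomputable section

/-- The highest weight monomial `X_k^{(a)} = ∏_{i=0}^{k-1} Y_{aq^{k-2i-1}}`,
encoded additively by its exponent function on the variables `Y_b`, `b ∈ ℂˣ`. -/
def Xmon (q a : ℂˣ) (k : ℕ) : ℂˣ →₀ ℤ :=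
  ∑ i ∈ Finset.range k, Finsupp.single (a * q ^ ((k : ℤ) - 2 * i - 1)) 1

/-- `A_b = Y_{bq⁻¹} Y_{bq}` (additive encoding). -/
def Amon (q b : ℂˣ) : ℂˣ →₀ ℤ :=
  Finsupp.single (b * q⁻¹) 1 + Finsupp.single (b * q) 1

/-- A monomial is dominant if all its exponents are nonnegative. -/
def Dominant (m : ℂˣ →₀ ℤ) : Prop := ∀ b : ℂˣ, 0 ≤ m b

lemma dominant_Xmon (q a : ℂˣ) (k : ℕ) : Dominant (Xmon q a k) := by
  intro b
  rw [Xmon, Finsupp.finsetSum_apply]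
  exact Finset.sum_nonneg fun _ _ => by rw [Finsupp.single_apply]; split_ifs <;> norm_num

section Injective

variable {q : ℂˣ} (hq : Function.Injective fun n : ℤ => q ^ n) (a : ℂˣ)
include hq

lemma single_mul_zpow_apply (m n : ℤ) (c : ℤ) :
    Finsupp.single (a * q ^ m) c (a * q ^ n) = if m = n then c else 0 := by
  simp only [Finsupp.single_apply, mul_right_inj, hq.eq_iff]

lemma Xmon_apply_mul_zpow_of_le (k : ℕ) {n : ℤ} (hn : k ≤ n) : Xmon q a k (a * q ^ n) = 0 := by
  rw [Xmon, Finsupp.finsetSum_apply]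
  refine Finset.sum_eq_zero fun j _ => ?_
  rw [single_mul_zpow_apply hq, if_neg (by omega)]

lemma Amon_mul_zpow_apply (m n : ℤ) :
    Amon q (a * q ^ m) (a * q ^ n) = (if m - 1 = n then 1 else 0) + if m + 1 = n then 1 else 0 := by
  rw [Amon, Finsupp.add_apply, mul_assoc, mul_assoc, ← zpow_sub_one, ← zpow_add_one,
    single_mul_zpow_apply hq, single_mul_zpow_apply hq]

lemma sum_Amon_apply_mul_zpow_succ (k : ℕ) {i : ℕ} (hi : i ≠ 0) :
    (∑ j ∈ Finset.range i, Amon q (a * q ^ ((k : ℤ) - 2 * j))) (a * q ^ ((k : ℤ) + 1)) = 1 := by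
  have hterm : ∀ j : ℕ, Amon q (a * q ^ ((k : ℤ) - 2 * j)) (a * q ^ ((k : ℤ) + 1)) =
      if 0 = j then 1 else 0 := by
    intro j
    rw [Amon_mul_zpow_apply hq, if_neg (by omega)]
    split_ifs <;> omega
  rw [Finsupp.finsetSum_apply, Finset.sum_congr rfl fun j _ => hterm j, Finset.sum_ite_eq,
    if_pos (Finset.mem_range.2 (Nat.pos_of_ne_zero hi))]

end Injective

theorem KR_unique_dominant_monomial_general (q a : ℂˣ) (hq : ∀ n : ℤ, q ^ n = 1 → n = 0)
    (k : ℕ) (i : ℕ) :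
    Dominant (Xmon q a k - ∑ j ∈ Finset.range i, Amon q (a * q ^ ((k : ℤ) - 2 * j)))
      ↔ i = 0 := by
  have hinj : Function.Injective fun n : ℤ => q ^ n :=
    injective_zpow_iff_not_isOfFinOrder.2 fun h =>
      let ⟨n, hn, hqn⟩ := isOfFinOrder_iff_zpow_eq_one.1 h
      hn (hq n hqn)
  refine ⟨fun hdom => ?_, fun hi => by simpa [hi] using dominant_Xmon q a k⟩
  by_contra hi
  have htop := hdom (a * q ^ ((k : ℤ) + 1))
  rw [Finsupp.sub_apply, Xmon_apply_mul_zpow_of_le hinj a k (by omega),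
    sum_Amon_apply_mul_zpow_succ hinj a k hi] at htop
  omega

/-- Among the `k+1` monomials `X_k^{(a)} ∏_{j=0}^{i-1} A_{aq^{k-2j}}⁻¹`,
`0 ≤ i ≤ k`, of the `sl₂` Kirillov–Reshetikhin `q`-character `χ_q(W_k^{(a)})`,
the only dominant one is the one with `i = 0`, namely `X_k^{(a)}`. -/
theorem KR_unique_dominant_monomial (q a : ℂˣ) (hq : ∀ n : ℤ, q ^ n = 1 → n = 0)
    (k : ℕ) (hk : 1 ≤ k) (i : ℕ) (hi : i ≤ k) :
    Dominant (Xmon q a k - ∑ j ∈ Finset.range i, Amon q (a * q ^ ((k : ℤ) - 2 * j)))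
      ↔ i = 0 :=
  KR_unique_dominant_monomial_general q a hq k i

end
end

section
/- In the free abelian group on symbols 1ₛ, 2ₛ (s ∈ ℤ), the monomial M_k := T(k,l+3,s)·T(k,l,s+6)·∏_{i=0}^{k-1} A₁[s+6k-6i-3]⁻¹ equals T(0,l,s+6k+6)·T(0,3k+l+3,s) for all k, l ≥ 1, where T(k,l,s) = (∏_{i=0}^{k-1} 1_{s+6i})(∏_{j=0}^{l-1} 2_{s+6k+2j+1}) and A₁[n] = 1_{n+3}·1_{n-3}·2_{n-2}⁻¹·2_{n}⁻¹·2_{n+2}⁻¹. -/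
/-! Write every monomial as a sum of strings `c_a c_{a+d} ⋯ c_{a+(n-1)d}`. Reindexed by
`i ↦ k - 1 - i`, the `A₁`-factors are `A₁[s+6i+3]`, and their sum over `i < k` is the two
`1`-strings of length `k` at `s` and `s+6` minus the `2`-string of length `3k` at `s+1`. The
`1`-strings cancel against those of `T(k,l+3,s)` and `T(k,l,s+6)`, and what remains is a
concatenation of `2`-strings. -/

noncomputable section

/-- The highest weight monomial
`T(k,l,s) = (∏_{i=0}^{k-1} 1_{s+6i}) (∏_{j=0}^{l-1} 2_{s+6k+2j+1})`,
encoded additively by its exponent function on the variables `1ₙ = Y₁[n]`, `2ₙ = Y₂[n]`. -/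
def T (k l : ℕ) (s : ℤ) : (Fin 2 × ℤ) →₀ ℤ :=
  (∑ i ∈ Finset.range k, Finsupp.single ((0 : Fin 2), s + 6 * (i : ℤ)) 1) +
  (∑ j ∈ Finset.range l, Finsupp.single ((1 : Fin 2), s + 6 * (k : ℤ) + 2 * (j : ℤ) + 1) 1)

/-- `A₁[n] = 1_{n+3} 1_{n-3} 2_{n-2}⁻¹ 2_n⁻¹ 2_{n+2}⁻¹` (additive encoding). -/
def A₁ (n : ℤ) : (Fin 2 × ℤ) →₀ ℤ :=
  Finsupp.single ((0 : Fin 2), n + 3) 1 + Finsupp.single ((0 : Fin 2), n - 3) 1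
    - Finsupp.single ((1 : Fin 2), n - 2) 1 - Finsupp.single ((1 : Fin 2), n) 1
    - Finsupp.single ((1 : Fin 2), n + 2) 1

open Finset

def qString (c : Fin 2) (a d : ℤ) (n : ℕ) : (Fin 2 × ℤ) →₀ ℤ :=
  ∑ j ∈ range n, Finsupp.single (c, a + d * j) 1

theorem qString_add (c : Fin 2) {a b : ℤ} (d : ℤ) (m n : ℕ) (hb : b = a + d * m) :
    qString c a d (m + n) = qString c a d m + qString c b d n := by
  unfold qString
  rw [sum_range_add]
  congr 1
  refine sum_congr rfl fun j _ => ?_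
  rw [hb]
  push_cast
  ring_nf

theorem qString_succ (c : Fin 2) (a d : ℤ) (n : ℕ) :
    qString c a d (n + 1) = qString c a d n + Finsupp.single (c, a + d * n) 1 := by
  simp [qString, sum_range_succ]

theorem T_eq_add_qString (k l : ℕ) (s : ℤ) :
    T k l s = qString 0 s 6 k + qString 1 (s + 6 * k + 1) 2 l := by
  unfold T qString
  congr 1
  refine sum_congr rfl fun j _ => ?_
  ring_nf

theorem T_zero (l : ℕ) (s : ℤ) : T 0 l s = qString 1 (s + 1) 2 l := by
  simp [T_eq_add_qString, qString]

theorem A₁_eq (a : ℤ) :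
    A₁ (a + 3) = Finsupp.single (0, a + 6) 1 + Finsupp.single (0, a) 1 - qString 1 (a + 1) 2 3 := by
  simp only [A₁, qString, sum_range_succ, range_zero, sum_empty]
  push_cast
  ring_nf
  abel

theorem sum_range_A₁ (a : ℤ) (k : ℕ) :
    ∑ i ∈ range k, A₁ (a + 6 * i + 3)
      = qString 0 (a + 6) 6 k + qString 0 a 6 k - qString 1 (a + 1) 2 (3 * k) := by
  induction k with
  | zero => simp [qString]
  | succ k ih =>
    rw [sum_range_succ, ih, A₁_eq, qString_succ 0 (a + 6), qString_succ 0 a,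
      Nat.mul_succ, qString_add 1 2 (3 * k) 3 (by push_cast; ring : a + 6 * k + 1 = _),
      show a + 6 + 6 * k = a + 6 * k + 6 by ring]
    abel

theorem sum_range_A₁_reflect (s : ℤ) (k : ℕ) :
    ∑ i ∈ range k, A₁ (s + 6 * k - 6 * i - 3) = ∑ i ∈ range k, A₁ (s + 6 * i + 3) := by
  rw [← sum_range_reflect]
  refine sum_congr rfl fun i hi => ?_
  have := mem_range.1 hi
  congr 1
  omega

theorem Mk_eq_product_of_KR_general (k l : ℕ) (s : ℤ) :
    T k (l + 3) s + T k l (s + 6)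
      - ∑ i ∈ Finset.range k, A₁ (s + 6 * (k : ℤ) - 6 * (i : ℤ) - 3)
      = T 0 l (s + 6 * (k : ℤ) + 6) + T 0 (3 * k + l + 3) s := by
  rw [sum_range_A₁_reflect, sum_range_A₁, T_zero, T_zero, T_eq_add_qString, T_eq_add_qString,
    add_assoc (3 * k), qString_add 1 2 (3 * k) (l + 3) (by push_cast; ring : s + 6 * k + 1 = _),
    show s + 6 + 6 * k + 1 = s + 6 * k + 6 + 1 by ring]
  abel

/-- For all `k, l ≥ 1`, the monomial
`M_k = T(k,l+3,s)·T(k,l,s+6)·∏_{i=0}^{k-1} A₁[s+6k-6i-3]⁻¹` equals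
`T(0,l,s+6k+6)·T(0,3k+l+3,s)`. -/
theorem Mk_eq_product_of_KR (k l : ℕ) (hk : 1 ≤ k) (hl : 1 ≤ l) (s : ℤ) :
    T k (l + 3) s + T k l (s + 6)
      - ∑ i ∈ Finset.range k, A₁ (s + 6 * (k : ℤ) - 6 * (i : ℤ) - 3)
      = T 0 l (s + 6 * (k : ℤ) + 6) + T 0 (3 * k + l + 3) s :=
  Mk_eq_product_of_KR_general k l s

end
end

section
/- In the free abelian group on symbols 1ₛ, 2ₛ (s ∈ ℤ), for all k ≥ 1 and l ∈ {1,2,3}: T(k,l,s)·T(k,0,s+6)·∏_{i=0}^{k-1} A₁[s+6k-6i-3]⁻¹ = T(0,3k+l,s). -/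
noncomputable section

lemma T_succ (k l : ℕ) (s : ℤ) :
    T (k+1) l s = Finsupp.single ((0 : Fin 2), s) (1:ℤ) + T k l (s+6) := by
  unfold T
  rw [Finset.sum_range_succ']
  have h1 : (∑ x ∈ Finset.range k,
        Finsupp.single ((0 : Fin 2), s + 6 * ((x : ℤ) + 1)) (1:ℤ))
      = ∑ i ∈ Finset.range k, Finsupp.single ((0 : Fin 2), s + 6 + 6 * (i : ℤ)) (1:ℤ) :=
    Finset.sum_congr rfl fun i _ => by congr 1; ring
  have h2 : (∑ j ∈ Finset.range l,
        Finsupp.single ((1 : Fin 2), s + 6 * (((k:ℕ)+1 : ℕ) : ℤ) + 2 * (j : ℤ) + 1) (1:ℤ))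
      = ∑ j ∈ Finset.range l,
        Finsupp.single ((1 : Fin 2), s + 6 + 6 * (k : ℤ) + 2 * (j : ℤ) + 1) (1:ℤ) :=
    Finset.sum_congr rfl fun j _ => by congr 1; push_cast; ring
  push_cast
  push_cast at h1 h2
  rw [h1, h2]
  simp only [mul_zero, add_zero]
  abel

lemma T0_succ (m : ℕ) (s : ℤ) :
    T 0 (m+1) s = Finsupp.single ((1 : Fin 2), s+1) (1:ℤ) + T 0 m (s+2) := by
  unfold T
  rw [Finset.sum_range_succ']
  have h : (∑ j ∈ Finset.range m,
        Finsupp.single ((1 : Fin 2), s + 6 * ((0:ℕ) : ℤ) + 2 * ((j : ℤ) + 1) + 1) (1:ℤ))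
      = ∑ j ∈ Finset.range m,
        Finsupp.single ((1 : Fin 2), s + 2 + 6 * ((0:ℕ) : ℤ) + 2 * (j : ℤ) + 1) (1:ℤ) :=
    Finset.sum_congr rfl fun j _ => by congr 1; push_cast; ring
  push_cast
  push_cast at h
  rw [h]
  simp only [Finset.range_zero, Finset.sum_empty, zero_add, mul_zero, add_zero]
  abel

lemma key (k l : ℕ) (s : ℤ) :
    T k l s + T k 0 (s + 6)
      - ∑ i ∈ Finset.range k, A₁ (s + 6 * (k : ℤ) - 6 * (i : ℤ) - 3)
      = T 0 (3 * k + l) s := by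
  induction k generalizing s with
  | zero => simp [T]
  | succ k ih =>
    have hA : ∑ i ∈ Finset.range (k+1), A₁ (s + 6 * (((k:ℕ)+1 : ℕ) : ℤ) - 6 * (i : ℤ) - 3)
        = (∑ i ∈ Finset.range k, A₁ ((s+6) + 6 * (k:ℤ) - 6 * (i : ℤ) - 3)) + A₁ (s + 3) := by
      rw [Finset.sum_range_succ]
      congr 1
      · exact Finset.sum_congr rfl fun i _ => by congr 1; push_cast; ring
      · congr 1; push_cast; ring
    have hT3 : T 0 (3*(k+1)+l) s
        = Finsupp.single ((1:Fin 2), s+1) (1:ℤ) + Finsupp.single ((1:Fin 2), s+3) (1:ℤ)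
          + Finsupp.single ((1:Fin 2), s+5) (1:ℤ) + T 0 (3*k+l) (s+6) := by
      have e : 3*(k+1)+l = (3*k+l)+1+1+1 := by ring
      rw [e, T0_succ, T0_succ, T0_succ,
        show s+2+1 = s+3 from by ring, show s+2+2+1 = s+5 from by ring,
        show s+2+2+2 = s+6 from by ring]
      abel
    rw [hA, T_succ, T_succ k 0 (s+6), hT3, ← ih (s+6)]
    unfold A₁
    rw [show s+3+3 = s+6 from by ring, show s+3-3 = s from by ring,
        show s+3-2 = s+1 from by ring, show s+3+2 = s+5 from by ring]
    abel

/-- For all `k ≥ 1` and `l ∈ {1,2,3}`, the monomial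
`T(k,l,s)·T(k,0,s+6)·∏_{i=0}^{k-1} A₁[s+6k-6i-3]⁻¹` equals `T(0,3k+l,s)`, the highest
weight monomial of the Kirillov–Reshetikhin module in the M-system of type `G₂`. -/
theorem Mk_eq_KR_highest_weight (k l : ℕ) (hk : 1 ≤ k) (hl : l ∈ ({1, 2, 3} : Set ℕ))
    (s : ℤ) :
    T k l s + T k 0 (s + 6)
      - ∑ i ∈ Finset.range k, A₁ (s + 6 * (k : ℤ) - 6 * (i : ℤ) - 3)
      = T 0 (3 * k + l) s := by
  exact key k l s

end
end
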